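/- Let φ = (1+√5)/2 and f_n(x,y) = sin(F_{n+1}x − F_n y) on 𝕋², where F_n are Fibonacci numbers. Then ‖∇f_n‖_{L²}·‖∂ₓf_n + φ·∂_yf_n‖_{L²} = √(F_{n+1}²/F_n² + 1)·|F_{n+1}/F_n − φ|·F_n²·‖f_n‖²_{L²}, and this quantity divided by ‖f_n‖²_{L²} converges to √((5+√5)/10) = |(1,φ)|/√5 as n → ∞. -/

import Mathlib

/-!
`sin ⟨k, x⟩ = (e^{i⟨k,x⟩} - e^{-i⟨k,x⟩}) / 2i` has only the two Fourier modes `±k`, so its three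
quadratic forms are read off at `k`: `‖∇f‖ ‖∂_α f‖ = |k| |⟨α, k⟩| ‖f‖²`. For `f_n` we have
`k = (F_{n+1}, -F_n)` and, with `α = (1, φ)`, Binet's formula gives `⟨α, k⟩ = F_{n+1} - φ F_n = ψⁿ`
with `|ψ| = φ⁻¹`. Hence the ratio is `|k| / φⁿ`, and `F_n / φⁿ → 1/√5` yields the limit
`√(1 + φ²) / √5`.
-/

open Real

/- We model a mean-zero function `f ∈ H¹(𝕋²)` on the flat torus `𝕋² = ℝ²/(2πℤ)²`
by its Fourier coefficients `a : ℤ × ℤ → ℂ`, `f = Σ aₖ e^{ik·x}`, `a₀ = 0`.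
By Parseval, `‖f‖²_{L²} = (2π)² Σ |aₖ|²`, `‖∇f‖²_{L²} = (2π)² Σ |k|²|aₖ|²` and
`‖⟨∇f,α⟩‖²_{L²} = (2π)² Σ ⟨k,α⟩²|aₖ|²`.  All inequalities below are homogeneous
in the number of `L²`-norm factors, so the constant `(2π)²` is harmlessly dropped. -/

/-- `‖f‖²_{L²(𝕋²)}` (modulo the factor `(2π)²`). -/
noncomputable def normSq (a : ℤ × ℤ → ℂ) : ℝ := ∑' k : ℤ × ℤ, ‖a k‖ ^ 2

/-- `‖∇f‖²_{L²(𝕋²)}` (modulo the factor `(2π)²`). -/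
noncomputable def gradSq (a : ℤ × ℤ → ℂ) : ℝ :=
  ∑' k : ℤ × ℤ, (((k.1 : ℝ)) ^ 2 + ((k.2 : ℝ)) ^ 2) * ‖a k‖ ^ 2

/-- `‖⟨∇f, α⟩‖²_{L²(𝕋²)}` (modulo the factor `(2π)²`). -/
noncomputable def dirSq (α : ℝ × ℝ) (a : ℤ × ℤ → ℂ) : ℝ :=
  ∑' k : ℤ × ℤ, (α.1 * k.1 + α.2 * k.2) ^ 2 * ‖a k‖ ^ 2

/-- `f ∈ H¹(𝕋²)`. -/
def IsH1 (a : ℤ × ℤ → ℂ) : Prop :=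
  Summable (fun k : ℤ × ℤ => ‖a k‖ ^ 2) ∧
  Summable (fun k : ℤ × ℤ => (((k.1 : ℝ)) ^ 2 + ((k.2 : ℝ)) ^ 2) * ‖a k‖ ^ 2)

open Filter

/-- Fourier coefficients of `f_n(x,y) = sin(F_{n+1} x - F_n y)`. -/
noncomputable def fibCoeff (n : ℕ) : ℤ × ℤ → ℂ := fun m =>
  if m = ((Nat.fib (n + 1) : ℤ), -(Nat.fib n : ℤ)) then (2 * Complex.I)⁻¹
  else if m = (-(Nat.fib (n + 1) : ℤ), (Nat.fib n : ℤ)) then -(2 * Complex.I)⁻¹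
  else 0

open goldenRatio Topology

noncomputable def sinCoeff (k : ℤ × ℤ) : ℤ × ℤ → ℂ := fun m =>
  if m = k then (2 * Complex.I)⁻¹ else if m = -k then -(2 * Complex.I)⁻¹ else 0

section sinCoeff

variable {k : ℤ × ℤ}

lemma tsum_mul_norm_sq_sinCoeff (hk : k ≠ 0) (w : ℤ × ℤ → ℝ) :
    ∑' m, w m * ‖sinCoeff k m‖ ^ 2 = (w k + w (-k)) / 4 := by
  have hneg : k ≠ -k := fun h => hk (by
    obtain ⟨k₁, k₂⟩ := k
    simp only [Prod.neg_mk, Prod.mk.injEq] at h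
    ext <;> simp <;> omega)
  have hnorm : ‖(2 * Complex.I)⁻¹‖ ^ 2 = 1 / 4 := by norm_num [norm_inv]
  rw [tsum_eq_sum (s := {k, -k}) fun m hm => by
      simp only [Finset.mem_insert, Finset.mem_singleton, not_or] at hm
      simp [sinCoeff, hm.1, hm.2],
    Finset.sum_pair hneg]
  simp only [sinCoeff, if_pos, if_neg hneg.symm, norm_neg, hnorm]
  ring

lemma normSq_sinCoeff (hk : k ≠ 0) : normSq (sinCoeff k) = 1 / 2 := by
  have h := tsum_mul_norm_sq_sinCoeff hk 1
  simp only [Pi.one_apply, one_mul] at h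
  rw [normSq, h]
  norm_num

lemma gradSq_sinCoeff (hk : k ≠ 0) :
    gradSq (sinCoeff k) = ((k.1 : ℝ) ^ 2 + (k.2 : ℝ) ^ 2) / 2 := by
  rw [gradSq, tsum_mul_norm_sq_sinCoeff hk, Prod.fst_neg, Prod.snd_neg]
  push_cast
  ring

lemma dirSq_sinCoeff (hk : k ≠ 0) (α : ℝ × ℝ) :
    dirSq α (sinCoeff k) = (α.1 * k.1 + α.2 * k.2) ^ 2 / 2 := by
  rw [dirSq, tsum_mul_norm_sq_sinCoeff hk, Prod.fst_neg, Prod.snd_neg]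
  push_cast
  ring

lemma sqrt_gradSq_mul_sqrt_dirSq_sinCoeff (hk : k ≠ 0) (α : ℝ × ℝ) :
    √(gradSq (sinCoeff k)) * √(dirSq α (sinCoeff k))
      = √((k.1 : ℝ) ^ 2 + (k.2 : ℝ) ^ 2) * |α.1 * k.1 + α.2 * k.2| *
          normSq (sinCoeff k) := by
  rw [gradSq_sinCoeff hk, dirSq_sinCoeff hk, normSq_sinCoeff hk, sqrt_div' _ zero_le_two,
    sqrt_div' _ zero_le_two, sqrt_sq_eq_abs, div_mul_div_comm, mul_self_sqrt zero_le_two]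
  ring

end sinCoeff

lemma fibCoeff_eq_sinCoeff (n : ℕ) :
    fibCoeff n = sinCoeff ((Nat.fib (n + 1) : ℤ), -(Nat.fib n : ℤ)) := by
  funext m
  simp [fibCoeff, sinCoeff]

lemma fib_pair_ne_zero (n : ℕ) : ((Nat.fib (n + 1) : ℤ), -(Nat.fib n : ℤ)) ≠ 0 := by
  simp [Prod.ext_iff, (Nat.fib_pos.2 n.succ_pos).ne']

lemma sqrt_gradSq_mul_sqrt_dirSq_fibCoeff (n : ℕ) (x : ℝ) :
    √(gradSq (fibCoeff n)) * √(dirSq (1, x) (fibCoeff n))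
      = √((Nat.fib (n + 1) : ℝ) ^ 2 + (Nat.fib n : ℝ) ^ 2) *
          |(Nat.fib (n + 1) : ℝ) - x * Nat.fib n| * normSq (fibCoeff n) := by
  rw [fibCoeff_eq_sinCoeff, sqrt_gradSq_mul_sqrt_dirSq_sinCoeff (fib_pair_ne_zero n)]
  push_cast
  rw [neg_sq, one_mul, mul_neg, ← sub_eq_add_neg]

lemma normSq_fibCoeff (n : ℕ) : normSq (fibCoeff n) = 1 / 2 := by
  rw [fibCoeff_eq_sinCoeff, normSq_sinCoeff (fib_pair_ne_zero n)]

lemma sqrt_sq_div_sq_add_one_mul_abs_div_sub_mul_sq {F G : ℝ} (hG : 0 < G) (x : ℝ) :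
    √(F ^ 2 / G ^ 2 + 1) * |F / G - x| * G ^ 2 = √(F ^ 2 + G ^ 2) * |F - x * G| := by
  have h₁ : F ^ 2 / G ^ 2 + 1 = (F ^ 2 + G ^ 2) / G ^ 2 := by field_simp
  have h₂ : F / G - x = (F - x * G) / G := by field_simp
  rw [h₁, h₂, sqrt_div' _ (sq_nonneg G), sqrt_sq hG.le, abs_div, abs_of_pos hG]
  field_simp

lemma abs_fib_succ_sub_goldenRatio_mul_fib (n : ℕ) :
    |(Nat.fib (n + 1) : ℝ) - φ * Nat.fib n| = (φ ^ n)⁻¹ := by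
  rw [fib_succ_sub_goldenRatio_mul_fib, abs_pow, abs_of_neg goldenConj_neg, ← inv_goldenRatio,
    inv_pow]

lemma tendsto_fib_div_goldenRatio_pow :
    Tendsto (fun n => (Nat.fib n : ℝ) / φ ^ n) atTop (𝓝 (1 / √5)) := by
  have hr : |ψ / φ| < 1 := by
    rw [abs_div, abs_of_pos goldenRatio_pos, div_lt_one goldenRatio_pos,
      abs_of_neg goldenConj_neg]
    linarith [neg_one_lt_goldenConj, one_lt_goldenRatio]
  have h := ((tendsto_pow_atTop_nhds_zero_of_abs_lt_one hr).const_sub 1).div_const √5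
  rw [sub_zero] at h
  refine h.congr fun n => ?_
  rw [coe_fib_eq, div_pow]
  field_simp

lemma sqrt_five_add_sqrt_five_div_ten : √((5 + √5) / 10) = √(1 + φ ^ 2) / √5 := by
  rw [← sqrt_div' _ (by norm_num : (0 : ℝ) ≤ 5), goldenRatio_sq, goldenRatio]
  congr 1
  field_simp
  ring

lemma tendsto_sqrt_gradSq_mul_sqrt_dirSq_div_normSq_fibCoeff :
    Tendsto (fun n =>
        √(gradSq (fibCoeff n)) * √(dirSq (1, φ) (fibCoeff n)) / normSq (fibCoeff n))
      atTop (𝓝 (√(1 + φ ^ 2) / √5)) := by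
  have hF : Tendsto (fun n => (Nat.fib (n + 1) : ℝ) / φ ^ n) atTop (𝓝 (φ * (1 / √5))) := by
    refine ((tendsto_fib_div_goldenRatio_pow.comp (tendsto_add_atTop_nat 1)).const_mul φ).congr
      fun n => ?_
    rw [Function.comp_apply, pow_succ]
    field_simp
  have hscale (a b : ℝ) {t : ℝ} (ht : 0 < t) :
      √(a ^ 2 + b ^ 2) * t⁻¹ = √((a / t) ^ 2 + (b / t) ^ 2) := by
    rw [div_pow, div_pow, ← add_div, sqrt_div' _ (sq_nonneg t), sqrt_sq ht.le, div_eq_mul_inv]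
  have hlim := ((hF.pow 2).add (tendsto_fib_div_goldenRatio_pow.pow 2)).sqrt
  convert hlim using 2 with n
  · rw [sqrt_gradSq_mul_sqrt_dirSq_fibCoeff, abs_fib_succ_sub_goldenRatio_mul_fib,
      mul_div_cancel_right₀ _ (by rw [normSq_fibCoeff]; norm_num), hscale _ _ (by positivity)]
  · rw [mul_one_div, ← hscale _ _ (by positivity), one_pow, add_comm, div_eq_mul_inv]

/-- For `φ = (1+√5)/2` and `f_n(x,y) = sin(F_{n+1}x - F_n y)`:
`‖∇f_n‖ ⬝ ‖∂ₓf_n + φ ∂_y f_n‖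
  = √(F_{n+1}²/F_n² + 1) |F_{n+1}/F_n - φ| F_n² ‖f_n‖²`,
and this ratio converges to `√((5+√5)/10) = |(1,φ)|/√5`. -/
theorem stmt_11 :
    (∀ n : ℕ, 1 ≤ n →
      Real.sqrt (gradSq (fibCoeff n)) *
          Real.sqrt (dirSq (1, (1 + Real.sqrt 5) / 2) (fibCoeff n))
        = Real.sqrt ((Nat.fib (n + 1) : ℝ) ^ 2 / (Nat.fib n : ℝ) ^ 2 + 1) *
            |(Nat.fib (n + 1) : ℝ) / Nat.fib n - (1 + Real.sqrt 5) / 2| *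
            (Nat.fib n : ℝ) ^ 2 * normSq (fibCoeff n)) ∧
    Tendsto (fun n : ℕ =>
        Real.sqrt (gradSq (fibCoeff n)) *
          Real.sqrt (dirSq (1, (1 + Real.sqrt 5) / 2) (fibCoeff n)) /
          normSq (fibCoeff n))
      atTop (nhds (Real.sqrt ((5 + Real.sqrt 5) / 10))) ∧
    Real.sqrt ((5 + Real.sqrt 5) / 10)
      = Real.sqrt (1 + ((1 + Real.sqrt 5) / 2) ^ 2) / Real.sqrt 5 := by
  refine ⟨fun n hn => ?_, ?_, sqrt_five_add_sqrt_five_div_ten⟩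
  · rw [sqrt_gradSq_mul_sqrt_dirSq_fibCoeff, ← sqrt_sq_div_sq_add_one_mul_abs_div_sub_mul_sq
      (by exact_mod_cast Nat.fib_pos.2 hn)]
  · rw [sqrt_five_add_sqrt_five_div_ten]
    exact tendsto_sqrt_gradSq_mul_sqrt_dirSq_div_normSq_fibCoeff
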